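/- arXiv:1501.02762 — 7 statements merged into one kernel-verified Lean document; each statement's English description precedes it below -/
import Mathlib

section
/- Let Γ ⊂ ℝⁿ be an open convex cone with vertex at the origin containing the positive orthant Γₙ, and let f : Γ → ℝ be concave with fᵢ > 0 and satisfying: for every σ < sup_Γ f and λ ∈ Γ, lim_{t→∞} f(tλ) > σ. Then for any σ ∈ (sup_{∂Γ} f, sup_Γ f) with Γ^σ = {λ : f(λ) > σ} nonempty, there exists N > 0 such that Γ + N·𝟙 ⊂ Γ^σ, where 𝟙 = (1,…,1). -/
open Finset Filter

theorem translate_cone_into_superlevel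
    (n : ℕ) (Γ : Set (Fin n → ℝ)) (f : (Fin n → ℝ) → ℝ) (σ : ℝ)
    (hopen : IsOpen Γ)
    (hsymm : ∀ (π : Equiv.Perm (Fin n)), ∀ x ∈ Γ, (fun i => x (π i)) ∈ Γ)
    (hcone : ∀ t : ℝ, 0 < t → ∀ x ∈ Γ, t • x ∈ Γ)
    (hconv : Convex ℝ Γ)
    (horthant : {x : Fin n → ℝ | ∀ i, 0 < x i} ⊆ Γ)
    (hsmooth : ContDiffOn ℝ (⊤ : ℕ∞) f Γ)
    (hconc : ConcaveOn ℝ Γ f)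
    (hD : ∀ x ∈ Γ, ∀ i, 0 < fderiv ℝ f x (Pi.single i 1))
    (hray : ∀ σ' : ℝ, (∃ y ∈ Γ, σ' < f y) →
      ∀ lam ∈ Γ, ∀ᶠ t : ℝ in atTop, σ' < f (t • lam))
    (hbelow : ∃ y ∈ Γ, σ < f y)
    (hbd : ∀ x ∈ frontier Γ, ∀ᶠ y in nhdsWithin x Γ, f y < σ) :
    ∃ N : ℝ, 0 < N ∧ ∀ x ∈ Γ,
      (x + fun _ => N) ∈ Γ ∧ σ < f (x + fun _ => N) := by
  classical
  have hone : (fun _ : Fin n => (1:ℝ)) ∈ Γ := horthant (fun i => one_pos)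
  have hsum : ∀ a ∈ Γ, ∀ b ∈ Γ, a + b ∈ Γ := by
    intro a ha b hb
    have hmid : (1/2 : ℝ) • a + (1/2 : ℝ) • b ∈ Γ :=
      hconv ha hb (by norm_num) (by norm_num) (by norm_num)
    have h2 := hcone 2 (by norm_num) _ hmid
    convert h2 using 1
    funext i
    simp [Pi.smul_apply, smul_eq_mul]
    ring
  have hcont : ContinuousOn f Γ := hsmooth.continuousOn
  -- Lemma A : weak monotonicity
  have lemA : ∀ z ∈ Γ, σ < f z → ∀ x ∈ Γ, σ ≤ f (z + x) := by
    intro z hz hfz x hx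
    have hzx : z + x ∈ Γ := hsum z hz x hx
    obtain ⟨T, hT⟩ := Filter.eventually_atTop.1 (hray σ hbelow x hx)
    set ε : ℝ := min (1/2) (1 / (max T 1)) with hε
    have hmax : (0:ℝ) < max T 1 := lt_of_lt_of_le one_pos (le_max_right T 1)
    have hεpos : 0 < ε := lt_min (by norm_num) (by positivity)
    have key : ∀ α : ℝ, 0 < α → α ≤ ε → σ < f ((1 - α) • z + x) := by
      intro α hα hαε
      have hα1 : α < 1 := lt_of_le_of_lt (hαε.trans (min_le_left _ _)) (by norm_num)
      have htpos : 0 < 1/α := by positivity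
      have htT : T ≤ 1/α := by
        have h1 : α ≤ 1 / max T 1 := hαε.trans (min_le_right _ _)
        refine le_trans (le_max_left T 1) ((le_div_iff₀ hα).2 ?_)
        calc max T 1 * α ≤ max T 1 * (1 / max T 1) :=
              mul_le_mul_of_nonneg_left h1 hmax.le
          _ = 1 := mul_one_div_cancel hmax.ne'
      have hfx : σ < f ((1/α) • x) := hT _ htT
      have hxt : (1/α) • x ∈ Γ := hcone _ htpos x hx
      have hcomb := hconc.2 hz hxt (by linarith : (0:ℝ) ≤ 1 - α) hα.le (by ring)
      have hrw : (1 - α) • z + α • ((1/α) • x) = (1 - α) • z + x := by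
        rw [smul_smul]
        congr 1
        rw [mul_one_div, div_self hα.ne', one_smul]
      rw [hrw] at hcomb
      calc σ = (1 - α) * σ + α * σ := by ring
        _ < (1 - α) * f z + α * f ((1/α) • x) := by
            apply add_lt_add_of_lt_of_le
            · exact mul_lt_mul_of_pos_left hfz (by linarith)
            · exact (mul_le_mul_of_nonneg_left hfx.le hα.le)
        _ ≤ f ((1 - α) • z + x) := hcomb
    -- take the limit α → 0⁺
    have hcontat : ContinuousAt f (z + x) := hcont.continuousAt (hopen.mem_nhds hzx)
    have htend : Tendsto (fun α : ℝ => f ((1 - α) • z + x)) (nhdsWithin 0 (Set.Ioi 0))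
        (nhds (f (z + x))) := by
      apply Tendsto.mono_left _ nhdsWithin_le_nhds
      have h1 : Tendsto (fun α : ℝ => (1 - α) • z + x) (nhds 0) (nhds (z + x)) := by
        have : Tendsto (fun α : ℝ => (1 - α)) (nhds (0:ℝ)) (nhds 1) := by
          have hc : Continuous (fun α : ℝ => (1:ℝ) - α) := continuous_const.sub continuous_id
          simpa using hc.tendsto 0
        have h2 := (this.smul (tendsto_const_nhds (x := z))).add
          (tendsto_const_nhds (x := x) (f := nhds (0:ℝ)))
        simpa using h2
      exact hcontat.tendsto.comp h1
    have hev : ∀ᶠ α : ℝ in nhdsWithin 0 (Set.Ioi 0), σ ≤ f ((1 - α) • z + x) := by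
      filter_upwards [Ioo_mem_nhdsGT_of_mem (by
        exact Set.left_mem_Ico.2 hεpos : (0:ℝ) ∈ Set.Ico 0 ε)] with α hα
      exact (key α hα.1 hα.2.le).le
    exact ge_of_tendsto htend hev
  -- Lemma B : strict monotonicity
  have lemB : ∀ z ∈ Γ, σ < f z → ∀ x ∈ Γ, σ < f (z + x) := by
    intro z hz hfz x hx
    have h2x : (2:ℝ) • x ∈ Γ := hcone 2 (by norm_num) x hx
    have hA : σ ≤ f (z + (2:ℝ) • x) := lemA z hz hfz _ h2x
    have hz2 : z + (2:ℝ) • x ∈ Γ := hsum z hz _ h2x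
    have hcomb := hconc.2 hz hz2 (by norm_num : (0:ℝ) ≤ 1/2) (by norm_num : (0:ℝ) ≤ 1/2)
      (by norm_num)
    have hrw : (1/2 : ℝ) • z + (1/2 : ℝ) • (z + (2:ℝ) • x) = z + x := by
      funext i
      simp [Pi.smul_apply, smul_eq_mul]
      ring
    rw [hrw] at hcomb
    calc σ = (1/2 : ℝ) * σ + (1/2 : ℝ) * σ := by ring
      _ < 1/2 * f z + 1/2 * f (z + (2:ℝ) • x) := by
          apply add_lt_add_of_lt_of_le
          · linarith
          · linarith
      _ ≤ f (z + x) := hcomb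
  -- choose N with N • 𝟙 in the superlevel set
  obtain ⟨T, hT⟩ := Filter.eventually_atTop.1 (hray σ hbelow _ hone)
  refine ⟨max T 1, lt_of_lt_of_le one_pos (le_max_right T 1), ?_⟩
  intro x hx
  set N := max T 1 with hN
  have hNpos : (0:ℝ) < N := lt_of_lt_of_le one_pos (le_max_right T 1)
  have hN1 : (fun _ : Fin n => N) ∈ Γ := horthant (fun i => hNpos)
  have hfN : σ < f (fun _ : Fin n => N) := by
    have := hT N (le_max_left T 1)
    have hrw : N • (fun _ : Fin n => (1:ℝ)) = (fun _ : Fin n => N) := by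
      funext i; simp
    rwa [hrw] at this
  have hkey := lemB _ hN1 hfN x hx
  have hrw : (fun _ : Fin n => N) + x = x + fun _ => N := by
    funext i; simp [add_comm]
  constructor
  · rw [← hrw]; exact hsum _ hN1 x hx
  · rwa [hrw] at hkey
end

section
/- Under the hypotheses of the previous lemma, for any σ ∈ (sup_{∂Γ} f, sup_Γ f) there exists τ > 0 such that Σᵢ fᵢ(λ) > τ for every λ ∈ ∂Γ^σ = f⁻¹(σ). -/
open Finset Filter

lemma concave_grad_ineq {E : Type*} [NormedAddCommGroup E] [NormedSpace ℝ E]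
    {Γ : Set E} {f : E → ℝ} (hconc : ConcaveOn ℝ Γ f)
    {x y : E} (hx : x ∈ Γ) (hy : y ∈ Γ) {L : E →L[ℝ] ℝ} (hL : HasFDerivAt f L x) :
    f y ≤ f x + L (y - x) := by
  have hA : ConcaveOn ℝ ((AffineMap.lineMap x y : ℝ →ᵃ[ℝ] E) ⁻¹' Γ)
      (f ∘ (AffineMap.lineMap x y : ℝ →ᵃ[ℝ] E)) := hconc.comp_affineMap _
  have h0 : (0:ℝ) ∈ (AffineMap.lineMap x y : ℝ →ᵃ[ℝ] E) ⁻¹' Γ := by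
    simpa [AffineMap.lineMap_apply_zero] using hx
  have h1 : (1:ℝ) ∈ (AffineMap.lineMap x y : ℝ →ᵃ[ℝ] E) ⁻¹' Γ := by
    simpa [AffineMap.lineMap_apply_one] using hy
  have hline : HasDerivAt (fun s : ℝ => AffineMap.lineMap x y s) (y - x) 0 := by
    have h : HasDerivAt (fun s : ℝ => x + s • (y - x)) ((1:ℝ) • (y - x)) 0 :=
      (((hasDerivAt_id (0:ℝ)).smul_const (y - x)).const_add x)
    have heq : (fun s : ℝ => AffineMap.lineMap x y s) = fun s : ℝ => x + s • (y - x) := by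
      funext s; rw [AffineMap.lineMap_apply_module']; module
    rw [heq]; simpa using h
  have hLx : HasDerivAt (f ∘ (AffineMap.lineMap x y : ℝ →ᵃ[ℝ] E)) (L (y - x)) 0 := by
    have := (by simpa [AffineMap.lineMap_apply_zero] using hL : HasFDerivAt f L ((AffineMap.lineMap x y : ℝ →ᵃ[ℝ] E) 0)).comp_hasDerivAt 0 hline
    simpa [AffineMap.lineMap_apply_zero] using this
  have := hA.slope_le_of_hasDerivAt h0 h1 one_pos hLx
  rw [slope_def_field] at this
  simp only [Function.comp, AffineMap.lineMap_apply_zero, AffineMap.lineMap_apply_one] at this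
  linarith [this]

theorem sum_derivs_lower_bound_on_level_set
    (n : ℕ) (Γ : Set (Fin n → ℝ)) (f : (Fin n → ℝ) → ℝ) (σ : ℝ)
    (hopen : IsOpen Γ)
    (hsymm : ∀ (π : Equiv.Perm (Fin n)), ∀ x ∈ Γ, (fun i => x (π i)) ∈ Γ)
    (hcone : ∀ t : ℝ, 0 < t → ∀ x ∈ Γ, t • x ∈ Γ)
    (hconv : Convex ℝ Γ)
    (horthant : {x : Fin n → ℝ | ∀ i, 0 < x i} ⊆ Γ)
    (hsmooth : ContDiffOn ℝ (⊤ : ℕ∞) f Γ)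
    (hconc : ConcaveOn ℝ Γ f)
    (D : (Fin n → ℝ) → Fin n → ℝ)
    (hDdef : ∀ x ∈ Γ, ∀ i, D x i = fderiv ℝ f x (Pi.single i 1))
    (hDpos : ∀ x ∈ Γ, ∀ i, 0 < D x i)
    (hray : ∀ σ' : ℝ, (∃ y ∈ Γ, σ' < f y) →
      ∀ lam ∈ Γ, ∀ᶠ t : ℝ in atTop, σ' < f (t • lam))
    (hbelow : ∃ y ∈ Γ, σ < f y)
    (hbd : ∀ x ∈ frontier Γ, ∀ᶠ y in nhdsWithin x Γ, f y < σ) :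
    ∃ τ : ℝ, 0 < τ ∧ ∀ lam ∈ Γ, f lam = σ → τ < ∑ i, D lam i := by
  classical
  -- the all-ones vector is in Γ
  have hone : (fun _ : Fin n => (1:ℝ)) ∈ Γ := horthant (fun i => one_pos)
  -- pick t ≥ 1 with σ < f (t • 𝟙)
  obtain ⟨t, ht1, htσ⟩ : ∃ t : ℝ, 1 ≤ t ∧ σ < f (t • fun _ => (1:ℝ)) := by
    have := (hray σ hbelow _ hone).and (eventually_ge_atTop (1:ℝ))
    obtain ⟨t, h1, h2⟩ := this.exists
    exact ⟨t, h2, h1⟩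
  have ht0 : (0:ℝ) < t := lt_of_lt_of_le one_pos ht1
  have hμ : (t • fun _ => (1:ℝ)) ∈ Γ := hcone t ht0 _ hone
  set μ : Fin n → ℝ := t • fun _ => (1:ℝ) with hμdef
  refine ⟨(f μ - σ) / t, div_pos (by linarith) ht0, ?_⟩
  intro lam hlam hflam
  -- differentiability at lam
  have hdiff : DifferentiableAt ℝ f lam :=
    ((hsmooth.contDiffAt (hopen.mem_nhds hlam)).differentiableAt (by simp))
  set L : (Fin n → ℝ) →L[ℝ] ℝ := fderiv ℝ f lam with hLdef
  have hL : HasFDerivAt f L lam := hdiff.hasFDerivAt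
  -- L 𝟙 = ∑ D lam i
  have hLone : L (fun _ => (1:ℝ)) = ∑ i, D lam i := by
    have h1 : (fun _ : Fin n => (1:ℝ)) = ∑ i, Pi.single i (1:ℝ) := by
      funext j; rw [Finset.sum_apply]
      simp [Pi.single_apply]
    rw [h1, map_sum]
    exact Finset.sum_congr rfl fun i _ => (hDdef lam hlam i).symm
  -- L lam > 0
  have hLlam : 0 < L lam := by
    obtain ⟨s, hs2, hsσ⟩ : ∃ s : ℝ, 2 ≤ s ∧ σ < f (s • lam) := by
      have := (hray σ hbelow _ hlam).and (eventually_ge_atTop (2:ℝ))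
      obtain ⟨s, h1, h2⟩ := this.exists
      exact ⟨s, h2, h1⟩
    have hs0 : (0:ℝ) < s := lt_of_lt_of_le two_pos hs2
    have hslam : s • lam ∈ Γ := hcone s hs0 _ hlam
    have := concave_grad_ineq hconc hlam hslam hL
    have hmap : L (s • lam - lam) = (s - 1) * L lam := by
      have : s • lam - lam = (s - 1) • lam := by
        rw [sub_smul, one_smul]
      rw [this, map_smul, smul_eq_mul]
    rw [hmap, hflam] at this
    nlinarith
  -- gradient inequality at μ
  have hineq := concave_grad_ineq hconc hlam hμ hL
  have hmapμ : L (μ - lam) = t * ∑ i, D lam i - L lam := by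
    rw [map_sub, hμdef, map_smul, smul_eq_mul, hLone]
  rw [hmapμ, hflam] at hineq
  rw [div_lt_iff₀ ht0, mul_comm]
  linarith
end

section
/- An open symmetric convex cone Γ ⊊ ℝⁿ with vertex at the origin containing the positive orthant Γₙ is contained in the half-space {x ∈ ℝⁿ : Σᵢ xᵢ > 0}. -/
open Finset

theorem cone_subset_positive_trace_halfspace
    (n : ℕ) (Γ : Set (Fin n → ℝ))
    (hopen : IsOpen Γ)
    (hsymm : ∀ (π : Equiv.Perm (Fin n)), ∀ x ∈ Γ, (fun i => x (π i)) ∈ Γ)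
    (hcone : ∀ t : ℝ, 0 < t → ∀ x ∈ Γ, t • x ∈ Γ)
    (hconv : Convex ℝ Γ)
    (horthant : {x : Fin n → ℝ | ∀ i, 0 < x i} ⊆ Γ)
    (hne : Γ ≠ Set.univ) :
    Γ ⊆ {x : Fin n → ℝ | 0 < ∑ i, x i} := by
  rcases Nat.eq_zero_or_pos n with hn | hn
  · subst hn
    exact absurd (Set.eq_univ_of_forall fun x => horthant (fun i => i.elim0)) hne
  intro x hx
  by_contra hsum
  simp only [Set.mem_setOf_eq, not_lt] at hsum
  -- Step 1: 0 ∉ Γ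
  have hzero : (0 : Fin n → ℝ) ∉ Γ := by
    intro h0
    apply hne
    rcases Metric.isOpen_iff.mp hopen 0 h0 with ⟨ε, hε, hball⟩
    apply Set.eq_univ_of_forall
    intro z
    by_cases hz : z = 0
    · rwa [hz]
    · have hnz : 0 < ‖z‖ := norm_pos_iff.mpr hz
      have hw : (ε / (2 * ‖z‖)) • z ∈ Γ := by
        apply hball
        rw [Metric.mem_ball, dist_zero_right, norm_smul,
          Real.norm_of_nonneg (by positivity)]
        rw [div_mul_eq_mul_div, mul_comm (2:ℝ) ‖z‖, ← div_div,
          mul_div_assoc, div_self (ne_of_gt hnz), mul_one]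
        linarith
      have := hcone ((2 * ‖z‖) / ε) (by positivity) _ hw
      rwa [smul_smul, div_mul_div_comm, mul_comm ε (2 * ‖z‖),
        div_self (by positivity), one_smul] at this
  -- Step 2: a negative constant vector in Γ forces Γ = univ
  have hneg : ∀ c : ℝ, c < 0 → (fun _ => c : Fin n → ℝ) ∈ Γ → Γ = Set.univ := by
    intro c hc hcΓ
    apply Set.eq_univ_of_forall
    intro z
    set t : ℝ := 1 + ∑ i, |z i| with ht
    have htpos : 0 < t := by positivity
    have h1 : (fun i => z i + t) ∈ Γ := by
      apply horthant
      intro i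
      have h2 : |z i| ≤ ∑ j, |z j| :=
        Finset.single_le_sum (fun j _ => abs_nonneg (z j)) (Finset.mem_univ i)
      have := neg_abs_le (z i)
      simp only [Set.mem_setOf_eq]
      rw [ht]; linarith
    have h2 : (fun _ => -t : Fin n → ℝ) ∈ Γ := by
      have := hcone (t / (-c)) (div_pos htpos (neg_pos.mpr hc)) _ hcΓ
      convert this using 1
      funext i
      simp only [Pi.smul_apply, smul_eq_mul]
      field_simp [hc.ne]
    have h3 := hconv h1 h2 (by norm_num : (0:ℝ) ≤ 1/2) (by norm_num : (0:ℝ) ≤ 1/2)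
      (by norm_num)
    have h4 : (1/2 : ℝ) • (fun i => z i + t) + (1/2 : ℝ) • (fun _ => -t : Fin n → ℝ)
        = (1/2 : ℝ) • z := by
      funext i
      simp only [Pi.add_apply, Pi.smul_apply, smul_eq_mul]
      ring
    rw [h4] at h3
    have := hcone 2 (by norm_num) _ h3
    rwa [smul_smul, (by norm_num : (2:ℝ) * (1/2) = 1), one_smul] at this
  -- Step 3: average over permutations
  set N : ℝ := (Fintype.card (Equiv.Perm (Fin n)) : ℝ) with hN
  have hNpos : 0 < N := by
    rw [hN]
    exact_mod_cast Fintype.card_pos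
  set w : ℝ := N⁻¹ with hw
  set y : Fin n → ℝ := ∑ π : Equiv.Perm (Fin n), w • (fun i => x (π i)) with hy
  have hyΓ : y ∈ Γ := by
    apply hconv.sum_mem (fun _ _ => le_of_lt (inv_pos.mpr hNpos))
    · rw [Finset.sum_const, nsmul_eq_mul, Finset.card_univ]
      exact mul_inv_cancel₀ (ne_of_gt hNpos)
    · exact fun π _ => hsymm π x hx
  have hycoord : ∀ j, y j = w * ∑ π : Equiv.Perm (Fin n), x (π j) := by
    intro j
    rw [hy]
    simp only [Finset.sum_apply, Pi.smul_apply, smul_eq_mul]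
    rw [Finset.mul_sum]
  have hconst : ∀ j k, y j = y k := by
    intro j k
    rw [hycoord j, hycoord k]
    congr 1
    exact Fintype.sum_equiv (Equiv.mulRight (Equiv.swap j k))
      (fun σ => x (σ j)) (fun π => x (π k))
      (fun σ => by simp [Equiv.Perm.mul_apply, Equiv.swap_apply_right])
  -- sum of coordinates of y equals ∑ x i
  have hsumy : ∑ j, y j = ∑ i, x i := by
    have : ∀ π : Equiv.Perm (Fin n), ∑ j, x (π j) = ∑ i, x i :=
      fun π => Equiv.sum_comp π x
    calc ∑ j, y j = ∑ j, w * ∑ π : Equiv.Perm (Fin n), x (π j) := by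
          simp only [hycoord]
      _ = w * ∑ π : Equiv.Perm (Fin n), ∑ j, x (π j) := by
          rw [← Finset.mul_sum, Finset.sum_comm]
      _ = w * ∑ _π : Equiv.Perm (Fin n), ∑ i, x i := by
          simp only [this]
      _ = ∑ i, x i := by
          rw [Finset.sum_const, nsmul_eq_mul, Finset.card_univ, ← mul_assoc,
            (inv_mul_cancel₀ (ne_of_gt hNpos) : N⁻¹ * (Fintype.card (Equiv.Perm (Fin n)) : ℝ) = 1), one_mul]
  obtain ⟨j₀⟩ : Nonempty (Fin n) := ⟨⟨0, hn⟩⟩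
  have hyconst : y = fun _ => y j₀ := funext fun j => hconst j j₀
  have hny : (n : ℝ) * y j₀ = ∑ i, x i := by
    rw [← hsumy, hyconst]
    simp [Finset.sum_const, mul_comm]
  have hyle : y j₀ ≤ 0 := by
    have hnpos : (0:ℝ) < n := by exact_mod_cast hn
    nlinarith
  rcases lt_or_eq_of_le hyle with hlt | heq
  · exact hne (hneg (y j₀) hlt (hyconst ▸ hyΓ))
  · apply hzero
    have : y = 0 := by
      rw [hyconst, heq]; rfl
    rwa [this] at hyΓ
end

section
/- Let Γ ⊊ ℝⁿ be an open symmetric convex cone containing the positive orthant with Γ ≠ Γₙ. Then Γ' = {(x₁,…,x_{n−1}) : (x₁,…,x_{n−1},0) ∈ Γ} is a symmetric open convex cone in ℝ^{n−1} containing the positive orthant Γ_{n−1}, with Γ' ≠ ℝ^{n−1}, and moreover the closure satisfies cl(Γ) ∩ {xₙ = 0} = cl(Γ') (identifying {xₙ=0} with ℝ^{n−1}). -/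
/-!
Openness and symmetry of `Γ` together with `Γ ≠ Γₙ` give a point `z ∈ Γ` with `zₙ < 0`. For `y`
in the positive orthant, `(y, 0) = s z + ((y, 0) - s z)` with both summands in the convex cone `Γ`
once `s > 0` is small. If the whole hyperplane `{xₙ = 0}` lay in `Γ`, then every `x` would be such
a hyperplane point plus a positive multiple of `z` or of `(1, …, 1)`, so `Γ = ℝⁿ`. Finally the
slice is the preimage of the open convex set `Γ` under the linear map `y ↦ (y, 0)`, and closure
commutes with such preimages: a point of `cl Γ` is the limit of the open segment joining it to a
point of `Γ`, and that segment lies in `Γ`.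
-/

theorem Convex.closure_preimage_eq {E F : Type*} [AddCommGroup E] [Module ℝ E]
    [TopologicalSpace E] [IsTopologicalAddGroup E] [ContinuousSMul ℝ E]
    [AddCommGroup F] [Module ℝ F] [TopologicalSpace F] [IsTopologicalAddGroup F]
    [ContinuousSMul ℝ F] {s : Set F} (hs : Convex ℝ s) (hso : IsOpen s) (f : E →L[ℝ] F)
    {a : E} (ha : f a ∈ s) : closure (f ⁻¹' s) = f ⁻¹' closure s := by
  refine (f.continuous.closure_preimage_subset s).antisymm fun x hx => ?_
  have hseg : openSegment ℝ a x ⊆ f ⁻¹' s := by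
    rintro _ ⟨u, v, hu, hv, huv, rfl⟩
    have := hs.combo_interior_closure_mem_interior (hso.interior_eq.symm ▸ ha) hx hu hv.le huv
    simpa [hso.interior_eq] using this
  exact closure_mono hseg (segment_subset_closure_openSegment (right_mem_segment ℝ a x))

theorem Convex.add_mem_of_smul_mem {𝕜 E : Type*} [Field 𝕜] [LinearOrder 𝕜] [IsStrictOrderedRing 𝕜]
    [AddCommGroup E] [Module 𝕜 E] {s : Set E} (hs : Convex 𝕜 s)
    (hsmul : ∀ t : 𝕜, 0 < t → ∀ x ∈ s, t • x ∈ s) {x y : E} (hx : x ∈ s) (hy : y ∈ s) :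
    x + y ∈ s := by
  have hmid := hs hx hy (by positivity : (0 : 𝕜) ≤ 1 / 2) (by positivity) (add_halves 1)
  convert hsmul 2 two_pos _ hmid using 1
  simp [smul_add, smul_smul]

theorem IsOpen.exists_mem_apply_lt {ι : Type*} [DecidableEq ι] {U : Set (ι → ℝ)} (hU : IsOpen U)
    {x : ι → ℝ} (hx : x ∈ U) (i : ι) : ∃ x' ∈ U, x' i < x i := by
  have : ∀ᶠ t in nhds (x i), Function.update x i t ∈ U :=
    (continuous_const.update i continuous_id).continuousAt.preimage_mem_nhds
      (hU.mem_nhds (by simpa using hx))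
  obtain ⟨t, ht, htU⟩ := this.exists_lt
  exact ⟨_, htU, by simpa using ht⟩

theorem exists_pos_forall_mul_lt {ι : Type*} [Finite ι] {y : ι → ℝ} (hy : ∀ i, 0 < y i)
    (z : ι → ℝ) : ∃ s > 0, ∀ i, s * z i < y i := by
  have : ∀ᶠ s in nhdsWithin (0 : ℝ) (Set.Ioi 0), ∀ i, s * z i < y i :=
    Filter.eventually_all.2 fun i => eventually_nhdsWithin_of_eventually_nhds <|
      ((continuous_mul_const (z i)).tendsto' 0 0 (zero_mul _)).eventually_lt_const (hy i)
  obtain ⟨s, hs, hs0⟩ := (this.and self_mem_nhdsWithin).exists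
  exact ⟨s, hs0, hs⟩

theorem exists_mem_apply_neg_of_perm_invariant {ι : Type*} [DecidableEq ι] {Γ : Set (ι → ℝ)}
    (hopen : IsOpen Γ) (hsymm : ∀ π : Equiv.Perm ι, ∀ x ∈ Γ, (fun i => x (π i)) ∈ Γ)
    (hsub : ¬Γ ⊆ {x | ∀ i, 0 < x i}) (k : ι) : ∃ z ∈ Γ, z k < 0 := by
  simp only [Set.not_subset, Set.mem_ofPred_eq, not_forall, not_lt] at hsub
  obtain ⟨x, hx, j, hj⟩ := hsub
  obtain ⟨x', hx', hlt⟩ := hopen.exists_mem_apply_lt hx j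
  exact ⟨_, hsymm (Equiv.swap j k) x' hx', by simpa using hlt.trans_le hj⟩

noncomputable def snocZero (n : ℕ) : (Fin n → ℝ) →L[ℝ] (Fin (n + 1) → ℝ) :=
  LinearMap.toContinuousLinearMap
    { toFun := fun y => Fin.snoc y 0
      map_add' := fun y z => by ext i; refine Fin.lastCases ?_ (fun j => ?_) i <;> simp
      map_smul' := fun t y => by ext i; refine Fin.lastCases ?_ (fun j => ?_) i <;> simp }

theorem Fin.exists_perm_snoc_comp {n : ℕ} {α : Type*} (π : Equiv.Perm (Fin n)) :
    ∃ σ : Equiv.Perm (Fin (n + 1)), ∀ (y : Fin n → α) (a : α),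
      (fun i => (Fin.snoc y a : Fin (n + 1) → α) (σ i)) = Fin.snoc (fun i => y (π i)) a := by
  refine ⟨finSuccEquivLast.symm.permCongr (Equiv.optionCongr π), fun y a => ?_⟩
  ext i
  refine Fin.lastCases ?_ (fun j => ?_) i <;> simp [Equiv.permCongr_apply]

theorem ConvexCone.snoc_zero_mem_of_pos {n : ℕ} (K : ConvexCone ℝ (Fin (n + 1) → ℝ))
    (horthant : {x : Fin (n + 1) → ℝ | ∀ i, 0 < x i} ⊆ K)
    {z : Fin (n + 1) → ℝ} (hz : z ∈ K) (hzlast : z (Fin.last n) < 0)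
    {y : Fin n → ℝ} (hy : ∀ i, 0 < y i) :
    (Fin.snoc y 0 : Fin (n + 1) → ℝ) ∈ K := by
  obtain ⟨s, hs0, hs⟩ := exists_pos_forall_mul_lt hy (fun i => z i.castSucc)
  have hrest : Fin.snoc y 0 - s • z ∈ K := horthant fun i => by
    refine Fin.lastCases ?_ (fun j => ?_) i
    · simpa using mul_neg_of_pos_of_neg hs0 hzlast
    · simpa using hs j
  simpa using add_mem (K.smul_mem hs0 hz) hrest

theorem ConvexCone.mem_of_forall_snoc_zero_mem {n : ℕ} (K : ConvexCone ℝ (Fin (n + 1) → ℝ))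
    (horthant : {x : Fin (n + 1) → ℝ | ∀ i, 0 < x i} ⊆ K)
    {z : Fin (n + 1) → ℝ} (hz : z ∈ K) (hzlast : z (Fin.last n) < 0)
    (hH : ∀ y : Fin n → ℝ, (Fin.snoc y 0 : Fin (n + 1) → ℝ) ∈ K)
    (x : Fin (n + 1) → ℝ) : x ∈ K := by
  have hshift : ∀ p ∈ K, ∀ s : ℝ, 0 < s → x (Fin.last n) = s * p (Fin.last n) → x ∈ K := by
    intro p hp s hs hx
    have hlast : (x - s • p) (Fin.last n) = 0 := by simp [hx]
    have hrest := hH (Fin.init (x - s • p))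
    rw [← hlast, Fin.snoc_init_self] at hrest
    simpa using add_mem hrest (K.smul_mem hs hp)
  rcases lt_trichotomy (x (Fin.last n)) 0 with hneg | hzero | hpos
  · exact hshift z hz _ (div_pos_of_neg_of_neg hneg hzlast) (div_mul_cancel₀ _ hzlast.ne).symm
  · simpa [← hzero] using hH (Fin.init x)
  · exact hshift 1 (horthant fun _ => one_pos) _ hpos (mul_one _).symm

theorem cone_slice_properties
    (n : ℕ) (Γ : Set (Fin (n + 1) → ℝ))
    (hopen : IsOpen Γ)
    (hsymm : ∀ (π : Equiv.Perm (Fin (n + 1))), ∀ x ∈ Γ, (fun i => x (π i)) ∈ Γ)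
    (hcone : ∀ t : ℝ, 0 < t → ∀ x ∈ Γ, t • x ∈ Γ)
    (hconv : Convex ℝ Γ)
    (horthant : {x : Fin (n + 1) → ℝ | ∀ i, 0 < x i} ⊆ Γ)
    (hne : Γ ≠ Set.univ)
    (hneq : Γ ≠ {x : Fin (n + 1) → ℝ | ∀ i, 0 < x i}) :
    IsOpen {y : Fin n → ℝ | Fin.snoc y 0 ∈ Γ} ∧
    (∀ (π : Equiv.Perm (Fin n)), ∀ y ∈ {y : Fin n → ℝ | Fin.snoc y 0 ∈ Γ},
      (fun i => y (π i)) ∈ {y : Fin n → ℝ | Fin.snoc y 0 ∈ Γ}) ∧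
    (∀ t : ℝ, 0 < t → ∀ y ∈ {y : Fin n → ℝ | Fin.snoc y 0 ∈ Γ},
      t • y ∈ {y : Fin n → ℝ | Fin.snoc y 0 ∈ Γ}) ∧
    Convex ℝ {y : Fin n → ℝ | Fin.snoc y 0 ∈ Γ} ∧
    {y : Fin n → ℝ | ∀ i, 0 < y i} ⊆ {y : Fin n → ℝ | Fin.snoc y 0 ∈ Γ} ∧
    {y : Fin n → ℝ | Fin.snoc y 0 ∈ Γ} ≠ Set.univ ∧
    (∀ y : Fin n → ℝ, Fin.snoc y 0 ∈ closure Γ ↔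
      y ∈ closure {y : Fin n → ℝ | Fin.snoc y 0 ∈ Γ}) := by
  let K : ConvexCone ℝ (Fin (n + 1) → ℝ) :=
    ⟨Γ, fun t ht x hx => hcone t ht x hx, fun _ hx _ hy => hconv.add_mem_of_smul_mem hcone hx hy⟩
  obtain ⟨z, hz, hzlast⟩ := exists_mem_apply_neg_of_perm_invariant hopen hsymm
    (fun h => hneq (h.antisymm horthant)) (Fin.last n)
  have hslice_orthant : ∀ y : Fin n → ℝ, (∀ i, 0 < y i) → Fin.snoc y 0 ∈ Γ :=
    fun y hy => K.snoc_zero_mem_of_pos horthant hz hzlast hy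
  refine ⟨hopen.preimage (snocZero n).continuous, fun π y hy => ?_, fun t ht y hy => ?_,
    hconv.linear_preimage (snocZero n).toLinearMap, hslice_orthant,
    fun hslice => hne (Set.eq_univ_of_forall fun x => ?_), fun y => ?_⟩
  · obtain ⟨σ, hσ⟩ := Fin.exists_perm_snoc_comp π
    have hperm := hsymm σ _ hy
    rwa [hσ] at hperm
  · change snocZero n (t • y) ∈ Γ
    rw [map_smul]
    exact hcone t ht _ hy
  · exact K.mem_of_forall_snoc_zero_mem horthant hz hzlast (Set.eq_univ_iff_forall.1 hslice) x
  · change y ∈ snocZero n ⁻¹' closure Γ ↔ y ∈ closure (snocZero n ⁻¹' Γ)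
    rw [hconv.closure_preimage_eq hopen (snocZero n) (a := fun _ => 1)
      (hslice_orthant (fun _ => 1) fun _ => one_pos)]
end

section
/- Let v : B(1) → ℝ be smooth on the closed unit ball in ℝⁿ with v(0) + ε ≤ inf_{∂B(1)} v for some ε > 0. Define P = {x ∈ B(1) : |Dv(x)| < ε/2 and v(y) ≥ v(x) + Dv(x)·(y−x) for all y ∈ B(1)}. Then the open ball B(0, ε/2) is contained in the gradient image ∇v(P), and consequently c₀ εⁿ ≤ ∫_P det(D²v) for a dimensional constant c₀ > 0. -/
open Finset MeasureTheory Metric Matrix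
open scoped RealInnerProductSpace

namespace ABPAux
variable {n : ℕ}
local notation "E" => EuclideanSpace ℝ (Fin n)
lemma second_deriv_nonneg_of_localmin {g g' g'' : ℝ → ℝ}
    (hd : ∀ t, HasDerivAt g (g' t) t)
    (hd2 : ∀ t, HasDerivAt g' (g'' t) t) (hcont : Continuous g'')
    (hmin : IsLocalMin g 0) : 0 ≤ g'' 0 := by
  by_contra hneg
  push_neg at hneg
  have hev : ∀ᶠ t in nhds (0:ℝ), g'' t < 0 :=
    hcont.continuousAt.eventually_lt continuousAt_const hneg
  obtain ⟨δ, hδpos, hball⟩ := Metric.eventually_nhds_iff.1 hev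
  have hg'c : Continuous g' := by
    rw [continuous_iff_continuousAt]; exact fun t => (hd2 t).continuousAt
  have hgc : Continuous g := by
    rw [continuous_iff_continuousAt]; exact fun t => (hd t).continuousAt
  have hg'0 : g' 0 = 0 := hmin.hasDerivAt_eq_zero (hd 0)
  have hanti : StrictAntiOn g' (Set.Icc 0 (δ/2)) := by
    refine strictAntiOn_of_deriv_neg (convex_Icc _ _) hg'c.continuousOn ?_
    intro t ht
    rw [interior_Icc] at ht
    rw [(hd2 t).deriv]
    refine hball ?_
    rw [Real.dist_eq, sub_zero, abs_of_pos ht.1]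
    linarith [ht.2]
  have hganti : StrictAntiOn g (Set.Icc 0 (δ/2)) := by
    refine strictAntiOn_of_deriv_neg (convex_Icc _ _) hgc.continuousOn ?_
    intro t ht
    rw [interior_Icc] at ht
    rw [(hd t).deriv]
    have h1 := hanti (Set.left_mem_Icc.2 (by linarith)) (Set.mem_Icc.2 ⟨ht.1.le, ht.2.le⟩) ht.1
    linarith [hg'0 ▸ h1]
  have hevmin : ∀ᶠ y in nhds (0:ℝ), g 0 ≤ g y := hmin
  obtain ⟨η, hηpos, hmin'⟩ := Metric.eventually_nhds_iff.1 hevmin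
  set t := min (δ/2) (η/2) with ht
  have htpos : 0 < t := lt_min (by linarith) (by linarith)
  have h1 : g t < g 0 :=
    hganti (Set.left_mem_Icc.2 (by linarith)) (Set.mem_Icc.2 ⟨htpos.le, min_le_left _ _⟩) htpos
  have h2 : g 0 ≤ g t := by
    refine hmin' ?_
    rw [Real.dist_eq, sub_zero, abs_of_pos htpos]
    calc t ≤ η/2 := min_le_right _ _
    _ < η := by linarith
  linarith


noncomputable def dualIso : (E →L[ℝ] ℝ) →L[ℝ] E where
  toFun := fun ℓ => (InnerProductSpace.toDual ℝ (EuclideanSpace ℝ (Fin n))).symm ℓ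
  map_add' := fun a b => by simp
  map_smul' := fun c a => by
    simp [LinearIsometryEquiv.map_smulₛₗ, starRingEnd_apply, star_trivial]
  cont := (InnerProductSpace.toDual ℝ (EuclideanSpace ℝ (Fin n))).symm.continuous

lemma dualIso_inner (ℓ : E →L[ℝ] ℝ) (u : E) : ⟪(dualIso (n := n)) ℓ, u⟫ = ℓ u :=
  InnerProductSpace.toDual_symm_apply

lemma hasFDerivAt_fderiv {v : E → ℝ} (hv : ContDiff ℝ (⊤ : ℕ∞) v) (y : E) :
    HasFDerivAt (fderiv ℝ v) (fderiv ℝ (fderiv ℝ v) y) y :=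
  (((hv.fderiv_right (WithTop.coe_le_coe.2 le_top) : ContDiff ℝ 1 (fderiv ℝ v)).differentiable one_ne_zero) y).hasFDerivAt

lemma hasFDerivAt_gradient {v : E → ℝ} (hv : ContDiff ℝ (⊤ : ℕ∞) v) (y : E) :
    HasFDerivAt (gradient v) ((dualIso (n := n)).comp (fderiv ℝ (fderiv ℝ v) y)) y := by
  have hg : gradient v = ⇑(dualIso (n := n)) ∘ fderiv ℝ v := rfl
  rw [hg]
  exact (ContinuousLinearMap.hasFDerivAt _).comp y (hasFDerivAt_fderiv hv y)

lemma fderiv_gradient {v : E → ℝ} (hv : ContDiff ℝ (⊤ : ℕ∞) v) (y : E) :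
    fderiv ℝ (gradient v) y = (dualIso (n := n)).comp (fderiv ℝ (fderiv ℝ v) y) :=
  (hasFDerivAt_gradient hv y).fderiv

lemma fderiv_fderiv_apply {v : E → ℝ} (hv : ContDiff ℝ (⊤ : ℕ∞) v) (x : E) (w : E) :
    fderiv ℝ (fun y => fderiv ℝ v y w) x
      = (ContinuousLinearMap.apply ℝ ℝ w).comp (fderiv ℝ (fderiv ℝ v) x) :=
  (((ContinuousLinearMap.apply ℝ ℝ w).hasFDerivAt).comp x (hasFDerivAt_fderiv hv x)).fderiv

lemma hess_matrix_eq {v : E → ℝ} (hv : ContDiff ℝ (⊤ : ℕ∞) v) (x : E) :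
    (Matrix.of fun i j : Fin n =>
        fderiv ℝ (fun y => fderiv ℝ v y (EuclideanSpace.single j 1)) x
          (EuclideanSpace.single i 1))
      = Matrix.transpose (LinearMap.toMatrix (EuclideanSpace.basisFun (Fin n) ℝ).toBasis
          (EuclideanSpace.basisFun (Fin n) ℝ).toBasis
          (fderiv ℝ (gradient v) x : E →ₗ[ℝ] E)) := by
  ext i j
  rw [Matrix.transpose_apply, LinearMap.toMatrix_apply, Matrix.of_apply,
    fderiv_fderiv_apply hv]
  simp only [OrthonormalBasis.coe_toBasis, EuclideanSpace.basisFun_apply,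
    OrthonormalBasis.coe_toBasis_repr_apply, EuclideanSpace.basisFun_repr,
    ContinuousLinearMap.coe_coe, fderiv_gradient hv, ContinuousLinearMap.coe_comp',
    Function.comp_apply, ContinuousLinearMap.apply_apply]
  rw [← dualIso_inner (fderiv ℝ (fderiv ℝ v) x (EuclideanSpace.single i 1))
      (EuclideanSpace.single j 1)]
  simp [EuclideanSpace.inner_single_right]

lemma hess_det_eq {v : E → ℝ} (hv : ContDiff ℝ (⊤ : ℕ∞) v) (x : E) :
    (Matrix.of fun i j : Fin n =>
        fderiv ℝ (fun y => fderiv ℝ v y (EuclideanSpace.single j 1)) x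
          (EuclideanSpace.single i 1)).det
      = (fderiv ℝ (gradient v) x).det := by
  rw [hess_matrix_eq hv, Matrix.det_transpose, LinearMap.det_toMatrix]

lemma dot_eq_bilin (B : E →L[ℝ] E →L[ℝ] ℝ) (z : Fin n → ℝ) :
    dotProduct z ((Matrix.of fun i j : Fin n =>
        B (EuclideanSpace.single i 1) (EuclideanSpace.single j 1)) *ᵥ z)
      = B ((WithLp.equiv 2 (Fin n → ℝ)).symm z) ((WithLp.equiv 2 (Fin n → ℝ)).symm z) := by
  set u : EuclideanSpace ℝ (Fin n) := (WithLp.equiv 2 (Fin n → ℝ)).symm z with hudef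
  have hu : u = ∑ i, z i • EuclideanSpace.single i 1 := by
    ext i
    rw [hudef]
    have : (∑ j, z j • EuclideanSpace.single j (1:ℝ)) i
        = ∑ j, (z j • EuclideanSpace.single j (1:ℝ)) i := by
      rw [WithLp.ofLp_sum]; exact Finset.sum_apply i _ _
    simp [this, EuclideanSpace.single_apply]
  rw [hu]
  rw [map_sum]
  simp only [_root_.map_smul, ContinuousLinearMap.coe_sum', ContinuousLinearMap.coe_smul',
    Finset.sum_apply, Pi.smul_apply, smul_eq_mul, map_sum, Finset.mul_sum,
    ContinuousLinearMap.sum_apply, ContinuousLinearMap.smul_apply]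
  simp only [dotProduct, Matrix.mulVec, Matrix.of_apply, Finset.mul_sum]
  rw [Finset.sum_comm]
  refine Finset.sum_congr rfl fun i _ => Finset.sum_congr rfl fun j _ => ?_
  ring

lemma quad_nonneg {v : EuclideanSpace ℝ (Fin n) → ℝ} (hv : ContDiff ℝ (⊤ : ℕ∞) v) {x : EuclideanSpace ℝ (Fin n)}
    (hx : ‖x‖ < 1)
    (hsupp : ∀ y : EuclideanSpace ℝ (Fin n), ‖y‖ ≤ 1 → v x + ⟪gradient v x, y - x⟫ ≤ v y)
    (u : EuclideanSpace ℝ (Fin n)) :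
    0 ≤ fderiv ℝ (fderiv ℝ v) x u u := by
  set ξ := gradient v x with hξ
  set w : EuclideanSpace ℝ (Fin n) → ℝ := fun y => v y - ⟪ξ, y⟫ with hw
  have hwmin : IsLocalMin w x := by
    have hball : Metric.ball (0:EuclideanSpace ℝ (Fin n)) 1 ∈ nhds x :=
      Metric.isOpen_ball.mem_nhds (by simpa [Metric.mem_ball, dist_zero_right] using hx)
    filter_upwards [hball] with y hy
    have hy1 : ‖y‖ ≤ 1 := by
      rw [Metric.mem_ball, dist_zero_right] at hy
      exact hy.le
    have h := hsupp y hy1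
    simp only [hw, inner_sub_right] at h ⊢
    linarith
  set L : ℝ → EuclideanSpace ℝ (Fin n) := fun t => x + t • u with hLdef
  have hLd : ∀ t : ℝ, HasDerivAt L u t := by
    intro t
    have h1 : HasDerivAt (fun t : ℝ => t • u) ((1:ℝ) • u) t := (hasDerivAt_id t).smul_const u
    simpa [hLdef] using h1.const_add x
  have hL0 : L 0 = x := by simp [hLdef]
  have hLc : Continuous L := by
    rw [continuous_iff_continuousAt]; exact fun t => (hLd t).continuousAt
  set g : ℝ → ℝ := fun t => w (L t) with hg
  set g' : ℝ → ℝ := fun t => fderiv ℝ v (L t) u - ⟪ξ, u⟫ with hg'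
  set g'' : ℝ → ℝ := fun t => fderiv ℝ (fderiv ℝ v) (L t) u u with hg''
  have hd : ∀ t, HasDerivAt g (g' t) t := by
    intro t
    have h1 : HasDerivAt (fun t => v (L t)) (fderiv ℝ v (L t) u) t :=
      ((hv.differentiable (by simp)) (L t)).hasFDerivAt.comp_hasDerivAt t (hLd t)
    have h2 : HasDerivAt (fun t => ⟪ξ, L t⟫) ⟪ξ, u⟫ t := by
      have h3 := (innerSL ℝ ξ).hasFDerivAt.comp_hasDerivAt t (hLd t)
      exact h3
    exact h1.sub h2
  have hd2 : ∀ t, HasDerivAt g' (g'' t) t := by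
    intro t
    have h1 : HasDerivAt (fun t => fderiv ℝ v (L t)) (fderiv ℝ (fderiv ℝ v) (L t) u) t :=
      (hasFDerivAt_fderiv hv (L t)).comp_hasDerivAt t (hLd t)
    have h2 : HasDerivAt (fun t => fderiv ℝ v (L t) u) (fderiv ℝ (fderiv ℝ v) (L t) u u) t := by
      have h3 := (ContinuousLinearMap.apply ℝ ℝ u).hasFDerivAt.comp_hasDerivAt t h1
      exact h3
    simpa [hg'] using h2.sub_const ⟪ξ, u⟫
  have hcont : Continuous g'' := by
    have hc2 : Continuous (fderiv ℝ (fderiv ℝ v)) :=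
      (((hv.fderiv_right (WithTop.coe_le_coe.2 le_top) : ContDiff ℝ 1 (fderiv ℝ v)).fderiv_right le_rfl :
        ContDiff ℝ 0 _)).continuous
    exact ((hc2.comp hLc).clm_apply continuous_const).clm_apply continuous_const
  have hgmin : IsLocalMin g 0 := by
    have hLt : Filter.Tendsto L (nhds 0) (nhds x) := by
      have h4 := hLc.tendsto 0
      rwa [hL0] at h4
    have h5 : ∀ᶠ t in nhds (0:ℝ), w x ≤ w (L t) := hLt.eventually hwmin
    have hg0 : g 0 = w x := by rw [hg]; simp only [hL0]
    refine h5.mono fun t ht => ?_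
    rw [hg0]
    exact ht
  have h6 := second_deriv_nonneg_of_localmin hd hd2 hcont hgmin
  have hg''0 : g'' 0 = fderiv ℝ (fderiv ℝ v) x u u := by rw [hg'']; simp only [hL0]
  linarith [hg''0 ▸ h6]

lemma det_nonneg_of_min {v : EuclideanSpace ℝ (Fin n) → ℝ} (hv : ContDiff ℝ (⊤ : ℕ∞) v)
    {x : EuclideanSpace ℝ (Fin n)} (hx : ‖x‖ < 1)
    (hsupp : ∀ y : EuclideanSpace ℝ (Fin n), ‖y‖ ≤ 1 → v x + ⟪gradient v x, y - x⟫ ≤ v y) :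
    0 ≤ (fderiv ℝ (gradient v) x).det := by
  rw [← hess_det_eq hv]
  set M := (Matrix.of fun i j : Fin n =>
      fderiv ℝ (fun y => fderiv ℝ v y (EuclideanSpace.single j 1)) x
        (EuclideanSpace.single i 1)) with hMdef
  have hMentry : ∀ i j, M i j
      = fderiv ℝ (fderiv ℝ v) x (EuclideanSpace.single i 1) (EuclideanSpace.single j 1) := by
    intro i j
    rw [hMdef, Matrix.of_apply, fderiv_fderiv_apply hv]
    rfl
  have hsymm : ∀ a b : EuclideanSpace ℝ (Fin n),
      fderiv ℝ (fderiv ℝ v) x a b = fderiv ℝ (fderiv ℝ v) x b a := fun a b =>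
    second_derivative_symmetric (fun y => ((hv.differentiable (by simp)) y).hasFDerivAt)
      (hasFDerivAt_fderiv hv x) a b
  have hherm : M.IsHermitian := by
    ext i j
    rw [Matrix.conjTranspose_apply, hMentry, hMentry, hsymm]
    simp
  have hpsd : M.PosSemidef := by
    refine Matrix.PosSemidef.of_dotProduct_mulVec_nonneg hherm ?_
    intro z
    have hz : star z = z := by funext i; simp
    rw [hz]
    have hM2 : M = Matrix.of fun i j : Fin n =>
        fderiv ℝ (fderiv ℝ v) x (EuclideanSpace.single i 1) (EuclideanSpace.single j 1) := by
      ext i j; rw [hMentry]; rfl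
    rw [hM2, dot_eq_bilin]
    exact quad_nonneg hv hx hsupp _
  rw [hherm.det_eq_prod_eigenvalues]
  refine Finset.prod_nonneg fun i _ => ?_
  exact_mod_cast hpsd.eigenvalues_nonneg i

end ABPAux

open Finset MeasureTheory
open scoped RealInnerProductSpace

theorem abp_maximum_principle (n : ℕ) :
    ∃ c₀ : ℝ, 0 < c₀ ∧
      ∀ (v : EuclideanSpace ℝ (Fin n) → ℝ) (ε : ℝ), 0 < ε →
        ContDiff ℝ (⊤ : ℕ∞) v →
        (∀ x : EuclideanSpace ℝ (Fin n), ‖x‖ = 1 → v 0 + ε ≤ v x) →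
        (Metric.ball (0 : EuclideanSpace ℝ (Fin n)) (ε / 2) ⊆
            gradient v '' {x : EuclideanSpace ℝ (Fin n) | ‖x‖ ≤ 1 ∧
              ‖gradient v x‖ < ε / 2 ∧
              ∀ y : EuclideanSpace ℝ (Fin n), ‖y‖ ≤ 1 →
                v x + ⟪gradient v x, y - x⟫ ≤ v y}) ∧
        c₀ * ε ^ n ≤
          ∫ x in {x : EuclideanSpace ℝ (Fin n) | ‖x‖ ≤ 1 ∧
              ‖gradient v x‖ < ε / 2 ∧
              ∀ y : EuclideanSpace ℝ (Fin n), ‖y‖ ≤ 1 →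
                v x + ⟪gradient v x, y - x⟫ ≤ v y},
            Matrix.det (Matrix.of fun i j : Fin n =>
              fderiv ℝ (fun y => fderiv ℝ v y (EuclideanSpace.single j 1)) x
                (EuclideanSpace.single i 1)) := by
  classical
  refine ⟨(1/2)^n * (volume (Metric.ball (0 : EuclideanSpace ℝ (Fin n)) 1)).toReal, ?_, ?_⟩
  · have h1 : 0 < (volume (Metric.ball (0 : EuclideanSpace ℝ (Fin n)) 1)).toReal :=
      ENNReal.toReal_pos (measure_ball_pos _ _ one_pos).ne' measure_ball_lt_top.ne
    positivity
  intro v ε hε hv hbd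
  set P : Set (EuclideanSpace ℝ (Fin n)) := {x : EuclideanSpace ℝ (Fin n) | ‖x‖ ≤ 1 ∧
      ‖gradient v x‖ < ε / 2 ∧
      ∀ y : EuclideanSpace ℝ (Fin n), ‖y‖ ≤ 1 →
        v x + ⟪gradient v x, y - x⟫ ≤ v y} with hPdef
  have hgc : Continuous (gradient v) := by
    have h : gradient v = ⇑(ABPAux.dualIso (n := n)) ∘ fderiv ℝ v := rfl
    rw [h]
    exact (ABPAux.dualIso (n := n)).continuous.comp (hv.continuous_fderiv (by simp))
  -- the inclusion
  have hincl : Metric.ball (0 : EuclideanSpace ℝ (Fin n)) (ε / 2) ⊆ gradient v '' P := by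
    intro ξ hξ
    rw [Metric.mem_ball, dist_zero_right] at hξ
    set w : EuclideanSpace ℝ (Fin n) → ℝ := fun y => v y - ⟪ξ, y⟫ with hw
    have hwc : ContinuousOn w (Metric.closedBall 0 1) :=
      (hv.continuous.sub (continuous_const.inner continuous_id)).continuousOn
    obtain ⟨x₀, hx₀mem, hx₀min⟩ :=
      (isCompact_closedBall (0 : EuclideanSpace ℝ (Fin n)) 1).exists_isMinOn
        (Metric.nonempty_closedBall.2 zero_le_one) hwc
    have hx₀ : ‖x₀‖ ≤ 1 := by rwa [Metric.mem_closedBall, dist_zero_right] at hx₀mem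
    have hlt : ‖x₀‖ < 1 := by
      rcases lt_or_eq_of_le hx₀ with h | h
      · exact h
      · exfalso
        have h2 := hbd x₀ h
        have h3 : w x₀ ≤ w 0 := hx₀min (by
          rw [Metric.mem_closedBall, dist_zero_right, norm_zero]; exact zero_le_one)
        have h4 : ⟪ξ, x₀⟫ ≤ ‖ξ‖ * ‖x₀‖ := real_inner_le_norm ξ x₀
        rw [h] at h4
        simp only [hw, inner_zero_right, sub_zero] at h3
        linarith
    have hmin : IsLocalMin w x₀ := by
      refine hx₀min.isLocalMin ?_
      exact Filter.mem_of_superset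
        (Metric.isOpen_ball.mem_nhds (by rwa [Metric.mem_ball, dist_zero_right]))
        Metric.ball_subset_closedBall
    have hfd : HasFDerivAt w (fderiv ℝ v x₀ - innerSL ℝ ξ) x₀ :=
      ((hv.differentiable (by simp)) x₀).hasFDerivAt.sub ((innerSL ℝ ξ).hasFDerivAt)
    have hz : fderiv ℝ v x₀ - innerSL ℝ ξ = 0 := by
      rw [← hfd.fderiv]; exact hmin.fderiv_eq_zero
    have h5 : fderiv ℝ v x₀ = innerSL ℝ ξ := sub_eq_zero.1 hz
    have hgradeq : gradient v x₀ = ξ := by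
      have h6 : (InnerProductSpace.toDual ℝ (EuclideanSpace ℝ (Fin n))) ξ = innerSL ℝ ξ := by
        ext y; simp [InnerProductSpace.toDual_apply_apply]
      show (InnerProductSpace.toDual ℝ (EuclideanSpace ℝ (Fin n))).symm (fderiv ℝ v x₀) = ξ
      rw [h5, ← h6, LinearIsometryEquiv.symm_apply_apply]
    refine ⟨x₀, ⟨hx₀, ?_, ?_⟩, hgradeq⟩
    · rw [hgradeq]; exact hξ
    · intro y hy
      have h7 : w x₀ ≤ w y := hx₀min (by rwa [Metric.mem_closedBall, dist_zero_right])
      rw [hgradeq]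
      simp only [hw, inner_sub_right] at h7 ⊢
      linarith
  refine ⟨hincl, ?_⟩
  -- measurability
  have hPsub : P ⊆ Metric.closedBall 0 1 := fun x hx => by
    rw [Metric.mem_closedBall, dist_zero_right]; exact hx.1
  have hPmeas : MeasurableSet P := by
    have h1 : IsClosed {x : EuclideanSpace ℝ (Fin n) | ‖x‖ ≤ 1} :=
      isClosed_le continuous_norm continuous_const
    have h2 : IsOpen {x : EuclideanSpace ℝ (Fin n) | ‖gradient v x‖ < ε/2} :=
      isOpen_lt hgc.norm continuous_const
    have h3 : IsClosed {x : EuclideanSpace ℝ (Fin n) |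
        ∀ y : EuclideanSpace ℝ (Fin n), ‖y‖ ≤ 1 → v x + ⟪gradient v x, y - x⟫ ≤ v y} := by
      have heq : {x : EuclideanSpace ℝ (Fin n) |
          ∀ y : EuclideanSpace ℝ (Fin n), ‖y‖ ≤ 1 → v x + ⟪gradient v x, y - x⟫ ≤ v y}
          = ⋂ (y : EuclideanSpace ℝ (Fin n)) (_ : ‖y‖ ≤ 1),
            {x : EuclideanSpace ℝ (Fin n) | v x + ⟪gradient v x, y - x⟫ ≤ v y} := by
        ext x; simp [Set.mem_iInter]
      rw [heq]
      refine isClosed_iInter fun y => isClosed_iInter fun hy =>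
        isClosed_le ?_ continuous_const
      exact hv.continuous.add (hgc.inner (continuous_const.sub continuous_id))
    have hPeq : P = {x : EuclideanSpace ℝ (Fin n) | ‖x‖ ≤ 1}
        ∩ ({x : EuclideanSpace ℝ (Fin n) | ‖gradient v x‖ < ε/2}
          ∩ {x : EuclideanSpace ℝ (Fin n) |
            ∀ y : EuclideanSpace ℝ (Fin n), ‖y‖ ≤ 1 → v x + ⟪gradient v x, y - x⟫ ≤ v y}) := by
      ext x
      simp only [hPdef, Set.mem_setOf_eq, Set.mem_inter_iff]
    rw [hPeq]
    exact h1.measurableSet.inter (h2.measurableSet.inter h3.measurableSet)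
  -- continuity of determinant
  have hcontA : Continuous (fun y => fderiv ℝ (gradient v) y) := by
    have heq : (fun y => fderiv ℝ (gradient v) y)
        = fun y => (ContinuousLinearMap.compL ℝ (EuclideanSpace ℝ (Fin n))
            (EuclideanSpace ℝ (Fin n) →L[ℝ] ℝ) (EuclideanSpace ℝ (Fin n))
            (ABPAux.dualIso (n := n))) (fderiv ℝ (fderiv ℝ v) y) := by
      funext y
      rw [ABPAux.fderiv_gradient hv y]
      rfl
    rw [heq]
    refine (ContinuousLinearMap.continuous _).comp ?_
    exact (((hv.fderiv_right (WithTop.coe_le_coe.2 le_top) : ContDiff ℝ 1 (fderiv ℝ v)).fderiv_right le_rfl :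
      ContDiff ℝ 0 _)).continuous
  have hcontdet : Continuous fun x => |(fderiv ℝ (gradient v) x).det| :=
    (ContinuousLinearMap.continuous_det.comp hcontA).abs
  have hInt : IntegrableOn (fun x => |(fderiv ℝ (gradient v) x).det|) P volume :=
    (hcontdet.continuousOn.integrableOn_compact (isCompact_closedBall _ _)).mono_set hPsub
  -- Jacobian estimate
  have hmap : volume (gradient v '' P)
      ≤ ∫⁻ x in P, ENNReal.ofReal |(fderiv ℝ (gradient v) x).det| := by
    refine MeasureTheory.addHaar_image_le_lintegral_abs_det_fderiv volume hPmeas ?_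
    intro x _
    exact (ABPAux.fderiv_gradient hv x) ▸ (ABPAux.hasFDerivAt_gradient hv x).hasFDerivWithinAt
  have hball2 : volume (Metric.ball (0 : EuclideanSpace ℝ (Fin n)) (ε/2))
      ≤ ∫⁻ x in P, ENNReal.ofReal |(fderiv ℝ (gradient v) x).det| :=
    le_trans (measure_mono hincl) hmap
  have hlint : ∫⁻ x in P, ENNReal.ofReal |(fderiv ℝ (gradient v) x).det|
      = ENNReal.ofReal (∫ x in P, |(fderiv ℝ (gradient v) x).det|) :=
    (MeasureTheory.ofReal_integral_eq_lintegral_ofReal hInt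
      (Filter.Eventually.of_forall fun x => abs_nonneg _)).symm
  have hmain : (volume (Metric.ball (0 : EuclideanSpace ℝ (Fin n)) (ε/2))).toReal
      ≤ ∫ x in P, |(fderiv ℝ (gradient v) x).det| := by
    rw [hlint] at hball2
    have h8 := ENNReal.toReal_mono ENNReal.ofReal_ne_top hball2
    rwa [ENNReal.toReal_ofReal (integral_nonneg fun x => abs_nonneg _)] at h8
  -- a.e. equality with the Hessian determinant
  have hsph : volume {x : EuclideanSpace ℝ (Fin n) | ‖x‖ = 1} = 0 := by
    have heq : {x : EuclideanSpace ℝ (Fin n) | ‖x‖ = 1}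
        = Metric.sphere (0 : EuclideanSpace ℝ (Fin n)) 1 := by
      ext x; simp [Metric.mem_sphere, dist_zero_right]
    rw [heq]
    exact MeasureTheory.Measure.addHaar_sphere_of_ne_zero (μ := (volume : Measure (EuclideanSpace ℝ (Fin n)))) _ one_ne_zero
  have hae : ∀ᵐ x ∂(volume : Measure (EuclideanSpace ℝ (Fin n))), x ∈ P →
      |(fderiv ℝ (gradient v) x).det|
        = Matrix.det (Matrix.of fun i j : Fin n =>
            fderiv ℝ (fun y => fderiv ℝ v y (EuclideanSpace.single j 1)) x
              (EuclideanSpace.single i 1)) := by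
    have h8 : ∀ᵐ x ∂(volume : Measure (EuclideanSpace ℝ (Fin n))), ‖x‖ ≠ 1 := by
      rw [MeasureTheory.ae_iff]
      simpa using hsph
    refine h8.mono fun x hx hxP => ?_
    have hlt : ‖x‖ < 1 := lt_of_le_of_ne hxP.1 hx
    have hnn := ABPAux.det_nonneg_of_min hv hlt hxP.2.2
    rw [abs_of_nonneg hnn]
    exact (ABPAux.hess_det_eq hv x).symm
  have hintchange : ∫ x in P, |(fderiv ℝ (gradient v) x).det|
      = ∫ x in P, Matrix.det (Matrix.of fun i j : Fin n =>
          fderiv ℝ (fun y => fderiv ℝ v y (EuclideanSpace.single j 1)) x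
            (EuclideanSpace.single i 1)) :=
    MeasureTheory.setIntegral_congr_ae hPmeas hae
  -- volume of the small ball
  have hvb : volume (Metric.ball (0 : EuclideanSpace ℝ (Fin n)) (ε/2))
      = ENNReal.ofReal ((ε/2)^n) * volume (Metric.ball (0 : EuclideanSpace ℝ (Fin n)) 1) := by
    rw [MeasureTheory.Measure.addHaar_ball_of_pos volume _ (by linarith : (0:ℝ) < ε/2)]
    rw [finrank_euclideanSpace_fin]
  have hc : (1/2)^n * (volume (Metric.ball (0 : EuclideanSpace ℝ (Fin n)) 1)).toReal * ε^n
      = (volume (Metric.ball (0 : EuclideanSpace ℝ (Fin n)) (ε/2))).toReal := by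
    rw [hvb, ENNReal.toReal_mul, ENNReal.toReal_ofReal (by positivity)]
    have h9 : ((ε/2 : ℝ))^n = (1/2)^n * ε^n := by
      rw [div_pow, div_pow]; ring
    rw [h9]; ring
  rw [hc]
  calc (volume (Metric.ball (0 : EuclideanSpace ℝ (Fin n)) (ε/2))).toReal
      ≤ ∫ x in P, |(fderiv ℝ (gradient v) x).det| := hmain
    _ = _ := hintchange
end

section
/- If M is a real symmetric 2n×2n positive semidefinite matrix, viewed via the standard complex structure J on ℝ^{2n} ≅ ℂⁿ, then its complex Hermitian part A = (M + JᵀMJ)/2 satisfies det_{ℝ}(M) ≤ 2^{2n} det_{ℂ}(A)², where det_ℂ(A) is the determinant of the associated n×n Hermitian matrix. -/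
/-!
Since `Jᵀ M J` is again positive semidefinite and the determinant is monotone on positive
semidefinite matrices, `det M ≤ det (M + Jᵀ M J) = 2 ^ (2n) det p(M)`. The matrix `p(M)` commutes
with `J`, so it is the realification `[[Re A, -Im A], [Im A, Re A]]` of the Hermitian matrix `A`,
and the determinant of a realification is the squared modulus of the complex determinant, here
`(det A)²` because `det A` is real.
-/

open Matrix

/-- The standard complex structure on ℝ^{2n} ≅ ℂⁿ, as a block matrix. -/
noncomputable def stdJ (n : ℕ) : Matrix (Fin n ⊕ Fin n) (Fin n ⊕ Fin n) ℝ :=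
  Matrix.fromBlocks 0 (-1) 1 0

/-- The J-invariant (complex Hermitian) part of a real symmetric matrix. -/
noncomputable def hermPart (n : ℕ) (M : Matrix (Fin n ⊕ Fin n) (Fin n ⊕ Fin n) ℝ) :
    Matrix (Fin n ⊕ Fin n) (Fin n ⊕ Fin n) ℝ :=
  (1 / 2 : ℝ) • (M + (stdJ n)ᵀ * M * stdJ n)

/-- The n×n complex Hermitian matrix associated to the J-invariant part. -/
noncomputable def assocHermitian (n : ℕ)
    (M : Matrix (Fin n ⊕ Fin n) (Fin n ⊕ Fin n) ℝ) : Matrix (Fin n) (Fin n) ℂ :=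
  Matrix.of fun i j =>
    (hermPart n M (Sum.inl i) (Sum.inl j) : ℂ) +
      Complex.I * (hermPart n M (Sum.inr i) (Sum.inl j) : ℂ)

open Complex

section Determinants

variable {m : Type*} [Fintype m] [DecidableEq m]

theorem Matrix.IsHermitian.det_cfc {𝕜 : Type*} [RCLike 𝕜] {A : Matrix m m 𝕜}
    (hA : A.IsHermitian) (f : ℝ → ℝ) : (cfc f A).det = ∏ i, (f (hA.eigenvalues i) : 𝕜) := by
  simp [hA.cfc_eq, IsHermitian.cfc, -Unitary.conjStarAlgAut_apply]

theorem Matrix.PosSemidef.one_le_det_one_add {C : Matrix m m ℝ} (hC : C.PosSemidef) :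
    1 ≤ (1 + C).det := by
  have h : 1 + C = cfc (fun x : ℝ ↦ 1 + x) C := by
    have : IsSelfAdjoint C := hC.isHermitian
    rw [cfc_add .., cfc_const_one .., cfc_id' ..]
  rw [h, hC.isHermitian.det_cfc]
  exact Finset.one_le_prod fun i _ ↦ le_add_of_nonneg_right (hC.eigenvalues_nonneg i)

open scoped MatrixOrder in
theorem Matrix.PosSemidef.det_le_det_add {A B : Matrix m m ℝ} (hA : A.PosSemidef)
    (hB : B.PosSemidef) : A.det ≤ (A + B).det := by
  rcases eq_or_ne A.det 0 with hA0 | hA0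
  · exact hA0 ▸ (hA.add hB).det_nonneg
  set S := CFC.sqrt A
  have hS : S.PosSemidef := (CFC.sqrt_nonneg A).posSemidef
  have hSS : S * S = A := CFC.sqrt_mul_sqrt_self A hA.nonneg
  have hSu : IsUnit S.det := by
    refine isUnit_iff_ne_zero.mpr fun h ↦ hA0 ?_
    rw [← hSS, det_mul, h, zero_mul]
  have hC : (S⁻¹ * B * S⁻¹).PosSemidef := by
    have h := hB.conjTranspose_mul_mul_same S⁻¹
    rwa [conjTranspose_nonsing_inv, hS.isHermitian.eq] at h
  have hAB : A + B = S * (1 + S⁻¹ * B * S⁻¹) * S := by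
    rw [mul_add, mul_one, add_mul, hSS, ← mul_assoc, ← mul_assoc, mul_nonsing_inv _ hSu, one_mul,
      mul_assoc, nonsing_inv_mul _ hSu, mul_one]
  calc A.det = S.det * 1 * S.det := by rw [mul_one, ← det_mul, hSS]
    _ ≤ S.det * (1 + S⁻¹ * B * S⁻¹).det * S.det := by
      have := hS.det_nonneg
      gcongr
      exact hC.one_le_det_one_add
    _ = (A + B).det := by rw [hAB, det_mul, det_mul]

/-- The realification of a complex matrix is a `Fin 2`-block matrix of `2 × 2` matrices
representing complex numbers, so `Matrix.det_det` reduces its determinant to the norm `ℂ → ℝ`. -/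
theorem Matrix.det_fromBlocks_re_im (Z : Matrix m m ℂ) :
    (fromBlocks (Z.map re) (-Z.map im) (Z.map im) (Z.map re)).det = normSq Z.det := by
  let f : ℂ →+* Matrix (Fin 2) (Fin 2) ℝ := (Algebra.leftMulMatrix basisOneI).toRingHom
  let e : m ⊕ m ≃ m × Fin 2 :=
    ((Equiv.boolProdEquivSum m).symm.trans (Equiv.prodComm _ _)).trans
      (Equiv.prodCongr (Equiv.refl m) finTwoEquiv.symm)
  have hblocks : fromBlocks (Z.map re) (-Z.map im) (Z.map im) (Z.map re) =
      (comp m m (Fin 2) (Fin 2) ℝ (Z.map f)).submatrix e e := by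
    ext (i | i) (j | j) <;> simp [e, f, Algebra.leftMulMatrix_complex] <;> rfl
  rw [hblocks, det_submatrix_equiv_self, ← det_det, ← Algebra.norm_complex_apply,
    Algebra.norm_eq_matrix_det basisOneI]
  rfl

theorem Matrix.IsHermitian.normSq_det {Z : Matrix m m ℂ} (hZ : Z.IsHermitian) :
    normSq Z.det = Z.det.re ^ 2 := by
  have hreal : (Z.det.re : ℂ) = Z.det :=
    conj_eq_iff_re.mp (by rw [← star_def, ← det_conjTranspose, hZ.eq])
  rw [← hreal, normSq_ofReal, ofReal_re, sq]

end Determinants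

theorem Matrix.isHermitian_of_isSymm_fromBlocks_re_im {m : Type*} {Z : Matrix m m ℂ}
    (h : (fromBlocks (Z.map re) (-Z.map im) (Z.map im) (Z.map re)).IsSymm) : Z.IsHermitian := by
  obtain ⟨hre, him, -, -⟩ := isSymm_fromBlocks_iff.mp h
  ext i j
  apply Complex.ext
  · simpa using congrFun (congrFun hre i) j
  · simpa using congrFun (congrFun him i) j

section StdJ

theorem stdJ_transpose (n : ℕ) : (stdJ n)ᵀ = -stdJ n := by
  simp [stdJ, fromBlocks_transpose, fromBlocks_neg]

theorem stdJ_mul_self (n : ℕ) : stdJ n * stdJ n = -1 := by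
  simp [stdJ, fromBlocks_multiply, ← fromBlocks_one, fromBlocks_neg]

variable {n : ℕ}

theorem eq_fromBlocks_of_commute_stdJ {P : Matrix (Fin n ⊕ Fin n) (Fin n ⊕ Fin n) ℝ}
    (h : Commute (stdJ n) P) :
    P = fromBlocks P.toBlocks₁₁ (-P.toBlocks₂₁) P.toBlocks₂₁ P.toBlocks₁₁ := by
  have h' := h.eq
  rw [← fromBlocks_toBlocks P, stdJ, fromBlocks_multiply, fromBlocks_multiply] at h'
  simp only [zero_mul, mul_zero, one_mul, mul_one, neg_mul, mul_neg, add_zero, zero_add,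
    fromBlocks_inj] at h'
  obtain ⟨h11, h12, -, -⟩ := h'
  conv_lhs => rw [← fromBlocks_toBlocks P, ← h11, neg_inj.mp h12]

variable (M : Matrix (Fin n ⊕ Fin n) (Fin n ⊕ Fin n) ℝ)

theorem commute_stdJ_hermPart : Commute (stdJ n) (hermPart n M) := by
  have hJJ := stdJ_mul_self n
  have hJJt : stdJ n * (stdJ n)ᵀ = 1 := by rw [stdJ_transpose, mul_neg, hJJ, neg_neg]
  refine Commute.smul_right ?_ _
  calc stdJ n * (M + (stdJ n)ᵀ * M * stdJ n) = stdJ n * M + M * stdJ n := by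
        rw [mul_add, ← mul_assoc, ← mul_assoc, hJJt, one_mul]
    _ = (M + (stdJ n)ᵀ * M * stdJ n) * stdJ n := by
        rw [add_mul, mul_assoc _ (stdJ n), hJJ, mul_neg_one, stdJ_transpose, neg_mul, neg_neg,
          add_comm]

theorem two_smul_hermPart : (2 : ℝ) • hermPart n M = M + (stdJ n)ᵀ * M * stdJ n := by
  rw [hermPart, smul_smul]
  norm_num

theorem hermPart_eq_fromBlocks_re_im :
    hermPart n M = fromBlocks ((assocHermitian n M).map re) (-(assocHermitian n M).map im)
      ((assocHermitian n M).map im) ((assocHermitian n M).map re) := by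
  convert eq_fromBlocks_of_commute_stdJ (commute_stdJ_hermPart M) using 2 <;>
    ext i j <;> simp [assocHermitian, toBlocks₁₁, toBlocks₂₁]

variable {M}

theorem hermPart_isSymm (hM : M.IsSymm) : (hermPart n M).IsSymm := by
  simp [hermPart, IsSymm, transpose_smul, transpose_add, transpose_mul, hM.eq, mul_assoc]

theorem assocHermitian_isHermitian (hM : M.IsSymm) : (assocHermitian n M).IsHermitian :=
  isHermitian_of_isSymm_fromBlocks_re_im (hermPart_eq_fromBlocks_re_im M ▸ hermPart_isSymm hM)

end StdJ

theorem det_le_pow_mul_complex_det_sq_general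
    (n : ℕ) (M : Matrix (Fin n ⊕ Fin n) (Fin n ⊕ Fin n) ℝ)
    (hM : M.PosSemidef) :
    M.det ≤ 2 ^ (2 * n) * ((assocHermitian n M).det.re) ^ 2 := by
  have hA := assocHermitian_isHermitian (isHermitian_iff_isSymm.mp hM.isHermitian)
  calc M.det ≤ (M + (stdJ n)ᵀ * M * stdJ n).det :=
        hM.det_le_det_add (hM.conjTranspose_mul_mul_same (stdJ n))
    _ = 2 ^ (2 * n) * (hermPart n M).det := by
        rw [← two_smul_hermPart, det_smul, Fintype.card_sum, Fintype.card_fin, two_mul]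
    _ = 2 ^ (2 * n) * normSq (assocHermitian n M).det := by
        rw [hermPart_eq_fromBlocks_re_im, det_fromBlocks_re_im]
    _ = 2 ^ (2 * n) * (assocHermitian n M).det.re ^ 2 := by
        rw [hA.normSq_det]

theorem det_le_pow_mul_complex_det_sq
    (n : ℕ) (M : Matrix (Fin n ⊕ Fin n) (Fin n ⊕ Fin n) ℝ)
    (hsymm : M.IsSymm) (hM : M.PosSemidef) :
    M.det ≤ 2 ^ (2 * n) * ((assocHermitian n M).det.re) ^ 2 :=
  det_le_pow_mul_complex_det_sq_general n M hM
end

section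
/- Let A be a diagonal Hermitian n×n matrix with diagonal entries λ₁ ≥ … ≥ λₙ, and F(A) = f(λ(A)) for a smooth symmetric f with fᵢ > 0 concave. If B is any Hermitian matrix with eigenvalues μ₁ ≥ … ≥ μₙ, then Σᵢ F^{ii}(A)·B_{ii} ≥ Σᵢ F^{ii}(A)·μᵢ, where F^{ii}(A) = fᵢ(λ) satisfies F^{11} ≤ F^{22} ≤ … ≤ F^{nn}. -/
/-!
Writing `B = U diag(μ) U*` with `U` unitary, the diagonal of `B` is `D μ` for the doubly
stochastic matrix `D i j = |U i j|²`. By Birkhoff's theorem `D` is a convex combination of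
permutation matrices, and the pairing with `F` is linear in `D`, so it suffices to treat a
permutation matrix, where the claim is the rearrangement inequality for the oppositely ordered
`F` and `μ`.
-/

open Finset Matrix

variable {ι : Type*} [Fintype ι] [DecidableEq ι]

theorem Antivary.sum_mul_le_sum_mul_mulVec_of_mem_doublyStochastic {R : Type*} [Field R]
    [LinearOrder R] [IsStrictOrderedRing R] {f g : ι → R} (hfg : Antivary f g)
    {M : Matrix ι ι R} (hM : M ∈ doublyStochastic R ι) :
    ∑ i, f i * g i ≤ ∑ i, f i * (M *ᵥ g) i := by
  rw [← SetLike.mem_coe, doublyStochastic_eq_convexHull_permMatrix] at hM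
  refine convexHull_min
    (t := {N : Matrix ι ι R | ∑ i, f i * g i ≤ ∑ i, f i * (N *ᵥ g) i}) ?_
    (convex_halfSpace_ge ⟨fun M N => ?_, fun c M => ?_⟩ _) hM
  · rintro _ ⟨σ, rfl⟩
    simpa [permMatrix_mulVec] using hfg.sum_mul_le_sum_mul_comp_perm
  · simp [add_mulVec, mul_add, sum_add_distrib]
  · simp [smul_mulVec, mul_sum, mul_left_comm]

theorem Matrix.of_norm_sq_mem_doublyStochastic_of_mem_unitaryGroup {𝕜 : Type*} [RCLike 𝕜]
    {U : Matrix ι ι 𝕜} (hU : U ∈ unitaryGroup ι 𝕜) :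
    of (fun i j => ‖U i j‖ ^ 2) ∈ doublyStochastic ℝ ι := by
  refine mem_doublyStochastic_iff_sum.2 ⟨fun i j => sq_nonneg _, fun i => ?_, fun j => ?_⟩
  · have h := congrFun (congrFun (mem_unitaryGroup_iff.1 hU) i) i
    simp only [mul_apply, star_apply, RCLike.star_def, RCLike.mul_conj, one_apply_eq] at h
    exact_mod_cast h
  · have h := congrFun (congrFun (mem_unitaryGroup_iff'.1 hU) j) j
    simp only [mul_apply, star_apply, RCLike.star_def, RCLike.conj_mul, one_apply_eq] at h
    exact_mod_cast h

theorem Matrix.IsHermitian.re_diag_eq_mulVec_eigenvalues {𝕜 : Type*} [RCLike 𝕜]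
    {A : Matrix ι ι 𝕜} (hA : A.IsHermitian) :
    (fun i => RCLike.re (A i i)) =
      of (fun i j => ‖(hA.eigenvectorUnitary : Matrix ι ι 𝕜) i j‖ ^ 2) *ᵥ hA.eigenvalues := by
  ext i
  conv_lhs => rw [hA.spectral_theorem, Unitary.conjStarAlgAut_apply]
  rw [mul_apply]
  simp only [mul_diagonal, star_apply, RCLike.star_def, Function.comp_apply, mulVec,
    dotProduct, of_apply, map_sum]
  refine sum_congr rfl fun j _ => ?_
  rw [mul_right_comm, RCLike.mul_conj, ← RCLike.ofReal_pow, ← RCLike.ofReal_mul,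
    RCLike.ofReal_re, mul_comm]

theorem schur_horn_pairing_inequality_general
    (n : ℕ) (F : Fin n → ℝ) (hFmono : Monotone F)
    (B : Matrix (Fin n) (Fin n) ℂ) (hB : B.IsHermitian)
    (μ : Fin n → ℝ) (hμa : Antitone μ)
    (hμ : ∃ e : Equiv.Perm (Fin n), ∀ i, μ i = hB.eigenvalues (e i)) :
    ∑ i, F i * μ i ≤ ∑ i, F i * (B i i).re := by
  obtain ⟨e, he⟩ := hμ
  set D := of fun i j => ‖(hB.eigenvectorUnitary : Matrix (Fin n) (Fin n) ℂ) i j‖ ^ 2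
  have hev : hB.eigenvalues = (e⁻¹).permMatrix ℝ *ᵥ μ := by
    ext i
    simp [permMatrix_mulVec, he]
  have hdiag : (fun i => (B i i).re) = (D * (e⁻¹).permMatrix ℝ) *ᵥ μ := by
    rw [← mulVec_mulVec, ← hev]
    exact hB.re_diag_eq_mulVec_eigenvalues
  have hDP : D * (e⁻¹).permMatrix ℝ ∈ doublyStochastic ℝ (Fin n) :=
    mul_mem (of_norm_sq_mem_doublyStochastic_of_mem_unitaryGroup hB.eigenvectorUnitary.2)
      permMatrix_mem_doublyStochastic
  calc ∑ i, F i * μ i ≤ ∑ i, F i * ((D * (e⁻¹).permMatrix ℝ) *ᵥ μ) i :=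
        (hFmono.antivary hμa).sum_mul_le_sum_mul_mulVec_of_mem_doublyStochastic hDP
    _ = ∑ i, F i * (B i i).re := by rw [← hdiag]

theorem schur_horn_pairing_inequality
    (n : ℕ) (F : Fin n → ℝ) (hFpos : ∀ i, 0 < F i) (hFmono : Monotone F)
    (lam : Fin n → ℝ) (hlam : Antitone lam)
    (B : Matrix (Fin n) (Fin n) ℂ) (hB : B.IsHermitian)
    (μ : Fin n → ℝ) (hμa : Antitone μ)
    (hμ : ∃ e : Equiv.Perm (Fin n), ∀ i, μ i = hB.eigenvalues (e i)) :
    ∑ i, F i * μ i ≤ ∑ i, F i * (B i i).re :=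
  schur_horn_pairing_inequality_general n F hFmono B hB μ hμa hμ
end
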